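/- Let γ(u) = [[e^{2u}, 1],[1, e^{−2u}]] be the hyperbolic circle in ℚ³₊, so that γ̇(u) = [[2e^{2u}, 0],[0, −2e^{−2u}]] and ⟨γ̇(u), γ̇(u)⟩ = 4. Fix u ∈ ℝ. Then a Hermitian matrix V satisfies ⟨γ(u), V⟩ = 0, ⟨γ̇(u), V⟩ = 0 and ⟨V, V⟩ = 4 if and only if there exists α ∈ ℝ such that V = α·γ(u) + 2f₂ or V = α·γ(u) − 2f₂, where f₂ = [[0, i],[−i, 0]]. -/

import Mathlib

open Matrix

/-- The Lorentz inner product on 2×2 complex matrices, via determinant polarization. -/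
noncomputable def ip (V W : Matrix (Fin 2) (Fin 2) ℂ) : ℂ :=
  -(1 / 2) * ((V + W).det - V.det - W.det)

/-- The hyperbolic circle in the light cone. -/
noncomputable def γH (u : ℝ) : Matrix (Fin 2) (Fin 2) ℂ :=
  !![(Real.exp (2 * u) : ℂ), 1; 1, (Real.exp (-(2 * u)) : ℂ)]

/-- Its derivative. -/
noncomputable def γHdot (u : ℝ) : Matrix (Fin 2) (Fin 2) ℂ :=
  !![(2 * Real.exp (2 * u) : ℝ), 0; 0, (-(2 * Real.exp (-(2 * u))) : ℝ)]

/-- f₂ = [[0,i],[−i,0]]. -/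
noncomputable def f2 : Matrix (Fin 2) (Fin 2) ℂ := !![0, Complex.I; -Complex.I, 0]

/-!
Since `γ(u)` is null and orthogonal to `γ̇(u)`, and `f₂` is a unit vector orthogonal to both, the
Hermitian matrices orthogonal to `γ(u)` and `γ̇(u)` are exactly the plane spanned by `γ(u)` and `f₂`:
subtracting `α γ(u) + β f₂` with `V₀₁ = α + β i` leaves a diagonal matrix, and the two
orthogonality conditions kill its diagonal. On that plane `⟨α γ + β f₂, α γ + β f₂⟩ = β²`, so
`⟨V, V⟩ = 4` means `β = ±2`.
-/

lemma ip_apply (V W : Matrix (Fin 2) (Fin 2) ℂ) :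
    ip V W = -(1 / 2) * (V 0 0 * W 1 1 + V 1 1 * W 0 0 - V 0 1 * W 1 0 - V 1 0 * W 0 1) := by
  simp only [ip, det_fin_two, Matrix.add_apply]
  ring

lemma ip_comm (V W : Matrix (Fin 2) (Fin 2) ℂ) : ip V W = ip W V := by
  simp only [ip_apply]
  ring

lemma ip_self (V : Matrix (Fin 2) (Fin 2) ℂ) : ip V V = -V.det := by
  rw [ip_apply, det_fin_two]
  ring

lemma ip_add_right (V W X : Matrix (Fin 2) (Fin 2) ℂ) : ip V (W + X) = ip V W + ip V X := by
  simp only [ip_apply, Matrix.add_apply]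
  ring

lemma ip_sub_right (V W X : Matrix (Fin 2) (Fin 2) ℂ) : ip V (W - X) = ip V W - ip V X := by
  simp only [ip_apply, Matrix.sub_apply]
  ring

lemma ip_smul_right (c : ℂ) (V W : Matrix (Fin 2) (Fin 2) ℂ) : ip V (c • W) = c * ip V W := by
  simp only [ip_apply, Matrix.smul_apply, smul_eq_mul]
  ring

lemma ip_smul_left (c : ℂ) (V W : Matrix (Fin 2) (Fin 2) ℂ) : ip (c • V) W = c * ip V W := by
  rw [ip_comm, ip_smul_right, ip_comm]

lemma ip_add_left (V W X : Matrix (Fin 2) (Fin 2) ℂ) : ip (V + W) X = ip V X + ip W X := by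
  rw [ip_comm, ip_add_right, ip_comm, ip_comm X]

lemma ofReal_exp_mul_ofReal_exp_neg (x : ℝ) :
    (Real.exp x : ℂ) * (Real.exp (-x) : ℂ) = 1 := by
  rw [← Complex.ofReal_mul, Real.exp_neg, mul_inv_cancel₀ (Real.exp_ne_zero _), Complex.ofReal_one]

lemma hasDerivAt_γH_apply (u : ℝ) (i j : Fin 2) :
    HasDerivAt (fun u' => γH u' i j) (γHdot u i j) u := by
  have h2 : HasDerivAt (fun u' : ℝ => 2 * u') 2 u := by
    simpa using (hasDerivAt_id u).const_mul 2
  fin_cases i <;> fin_cases j <;> simp only [γH, γHdot, of_apply, cons_val', cons_val_zero,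
    cons_val_one, empty_val', cons_val_fin_one, Fin.isValue, Fin.zero_eta, Fin.mk_one]
  · simpa [mul_comm] using h2.exp.ofReal_comp
  · exact hasDerivAt_const u 1
  · exact hasDerivAt_const u 1
  · simpa [mul_comm] using h2.neg.exp.ofReal_comp

lemma det_γH (u : ℝ) : (γH u).det = 0 := by
  simp [γH, det_fin_two_of, -Complex.ofReal_exp, ofReal_exp_mul_ofReal_exp_neg]

lemma ip_γHdot_self (u : ℝ) : ip (γHdot u) (γHdot u) = 4 := by
  rw [ip_self, γHdot, det_fin_two_of]
  push_cast [-Complex.ofReal_exp]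
  linear_combination 4 * ofReal_exp_mul_ofReal_exp_neg (2 * u)

lemma ip_γH_self (u : ℝ) : ip (γH u) (γH u) = 0 := by
  rw [ip_self, det_γH, neg_zero]

lemma ip_γH_f2 (u : ℝ) : ip (γH u) f2 = 0 := by
  simp [ip_apply, γH, f2]

lemma ip_γHdot_γH (u : ℝ) : ip (γHdot u) (γH u) = 0 := by
  simp [ip_apply, γH, γHdot, -Complex.ofReal_exp]
  ring

lemma ip_γHdot_f2 (u : ℝ) : ip (γHdot u) f2 = 0 := by
  simp [ip_apply, γHdot, f2]

lemma ip_f2_self : ip f2 f2 = 1 := by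
  simp [ip_self, f2, det_fin_two_of]

lemma ip_γH_smul_γH_add_smul_f2 (u : ℝ) (α β : ℂ) : ip (γH u) (α • γH u + β • f2) = 0 := by
  rw [ip_add_right, ip_smul_right, ip_smul_right, ip_γH_self, ip_γH_f2]
  ring

lemma ip_γHdot_smul_γH_add_smul_f2 (u : ℝ) (α β : ℂ) :
    ip (γHdot u) (α • γH u + β • f2) = 0 := by
  rw [ip_add_right, ip_smul_right, ip_smul_right, ip_γHdot_γH, ip_γHdot_f2]
  ring

lemma ip_smul_γH_add_smul_f2_self (u : ℝ) (α β : ℂ) :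
    ip (α • γH u + β • f2) (α • γH u + β • f2) = β ^ 2 := by
  rw [ip_add_left, ip_smul_left, ip_smul_left, ip_γH_smul_γH_add_smul_f2, ip_add_right,
    ip_smul_right, ip_smul_right, ip_comm f2 (γH u), ip_γH_f2, ip_f2_self]
  ring

lemma isHermitian_smul_γH_add_smul_f2 (u α β : ℝ) :
    ((α : ℂ) • γH u + (β : ℂ) • f2).IsHermitian := by
  ext i j
  fin_cases i <;> fin_cases j <;> simp [γH, f2, -Complex.ofReal_exp]

lemma eq_zero_of_offDiag_eq_zero_of_ip_γH_γHdot {u : ℝ} {W : Matrix (Fin 2) (Fin 2) ℂ}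
    (h01 : W 0 1 = 0) (h10 : W 1 0 = 0) (hγ : ip (γH u) W = 0) (hγ' : ip (γHdot u) W = 0) :
    W = 0 := by
  rw [ip_apply, h01, h10] at hγ hγ'
  simp only [γH, γHdot, of_apply, cons_val', cons_val_zero, cons_val_one, empty_val',
    cons_val_fin_one, Fin.isValue] at hγ hγ'
  push_cast [-Complex.ofReal_exp] at hγ'
  have h11 : W 1 1 = 0 := by
    have : (Real.exp (2 * u) : ℂ) * W 1 1 = 0 := by linear_combination -hγ - hγ' / 2
    simpa [-Complex.ofReal_exp] using this
  have h00 : W 0 0 = 0 := by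
    have : (Real.exp (-(2 * u)) : ℂ) * W 0 0 = 0 := by linear_combination -hγ + hγ' / 2
    simpa [-Complex.ofReal_exp] using this
  ext i j
  fin_cases i <;> fin_cases j <;> assumption

lemma exists_eq_smul_γH_add_smul_f2 {u : ℝ} {V : Matrix (Fin 2) (Fin 2) ℂ} (hV : V.IsHermitian)
    (hγ : ip (γH u) V = 0) (hγ' : ip (γHdot u) V = 0) :
    ∃ α β : ℝ, V = (α : ℂ) • γH u + (β : ℂ) • f2 := by
  refine ⟨(V 0 1).re, (V 0 1).im,
    sub_eq_zero.mp (eq_zero_of_offDiag_eq_zero_of_ip_γH_γHdot (u := u) ?_ ?_ ?_ ?_)⟩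
  · simp [γH, f2, -Complex.ofReal_exp]
  · rw [← hV.apply 0 1]
    simp [γH, f2, -Complex.ofReal_exp]
  · rw [ip_sub_right, hγ, ip_γH_smul_γH_add_smul_f2, sub_zero]
  · rw [ip_sub_right, hγ', ip_γHdot_smul_γH_add_smul_f2, sub_zero]

theorem hyperbolic_circle_tangent_fields (u : ℝ) :
    (∀ i j : Fin 2, HasDerivAt (fun u' => γH u' i j) (γHdot u i j) u) ∧
    ip (γHdot u) (γHdot u) = 4 ∧
    ∀ V : Matrix (Fin 2) (Fin 2) ℂ,
      (V.IsHermitian ∧ ip (γH u) V = 0 ∧ ip (γHdot u) V = 0 ∧ ip V V = 4)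
      ↔ ∃ α : ℝ, V = (α : ℂ) • γH u + (2 : ℂ) • f2 ∨ V = (α : ℂ) • γH u - (2 : ℂ) • f2 := by
  refine ⟨hasDerivAt_γH_apply u, ip_γHdot_self u, fun V => ⟨?_, ?_⟩⟩
  · rintro ⟨hV, hγ, hγ', hVV⟩
    obtain ⟨α, β, rfl⟩ := exists_eq_smul_γH_add_smul_f2 hV hγ hγ'
    rw [ip_smul_γH_add_smul_f2_self] at hVV
    have hβ : β = 2 ∨ β = -2 := by
      have : (β : ℂ) ^ 2 = (2 : ℝ) ^ 2 := by rw [hVV]; norm_num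
      exact sq_eq_sq_iff_eq_or_eq_neg.mp (by exact_mod_cast this)
    refine ⟨α, ?_⟩
    rcases hβ with rfl | rfl
    · left; norm_num
    · right; simp [sub_eq_add_neg]
  · rintro ⟨α, hV⟩
    obtain ⟨β, hβ, rfl⟩ : ∃ β : ℝ, β ^ 2 = 4 ∧ V = (α : ℂ) • γH u + (β : ℂ) • f2 := by
      rcases hV with rfl | rfl
      exacts [⟨2, by norm_num, by norm_num⟩, ⟨-2, by norm_num, by simp [sub_eq_add_neg]⟩]
    exact ⟨isHermitian_smul_γH_add_smul_f2 u α β, ip_γH_smul_γH_add_smul_f2 u _ _,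
      ip_γHdot_smul_γH_add_smul_f2 u _ _, by rw [ip_smul_γH_add_smul_f2_self]; exact_mod_cast hβ⟩
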